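/- Let A be an n×n subring matrix with diagonal (p^{e_1},...,p^{e_{n-1}},1) and I = {i : e_i ≠ 0}. For each i ∈ I there exists exactly one index j ∈ {1,...,n} \ I with a_{ij} = 1, and a_{iℓ} = 0 for all other ℓ ∈ {1,...,n} \ I. -/
import Mathlib


def colSpan {n : ℕ} (A : Matrix (Fin n) (Fin n) ℤ) : AddSubgroup (Fin n → ℤ) :=
  AddSubgroup.closure (Set.range fun j => fun i => A i j)

def IsSubringOf {n : ℕ} (R : AddSubgroup (Fin n → ℤ)) : Prop :=
  (fun _ => (1 : ℤ)) ∈ R ∧ ∀ u v : Fin n → ℤ, u ∈ R → v ∈ R → u * v ∈ R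

def IsHNF {n : ℕ} (A : Matrix (Fin n) (Fin n) ℤ) : Prop :=
  (∀ i j : Fin n, (j : ℕ) < (i : ℕ) → A i j = 0) ∧
  (∀ i j : Fin n, (i : ℕ) < (j : ℕ) → 0 ≤ A i j ∧ A i j < A i i)

def IsSubringMatrix {n : ℕ} (A : Matrix (Fin n) (Fin n) ℤ) : Prop :=
  IsHNF A ∧ A.det ≠ 0 ∧ IsSubringOf (colSpan A)

def GenLE {n : ℕ} (R : AddSubgroup (Fin n → ℤ)) (k : ℕ) : Prop :=
  ∃ S : Finset ((Fin n → ℤ) ⧸ R), S.card ≤ k ∧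
    AddSubgroup.closure (S : Set ((Fin n → ℤ) ⧸ R)) = ⊤

def RankGe {n : ℕ} (R : AddSubgroup (Fin n → ℤ)) (k : ℕ) : Prop :=
  ∀ S : Finset ((Fin n → ℤ) ⧸ R),
    AddSubgroup.closure (S : Set ((Fin n → ℤ) ⧸ R)) = ⊤ → k ≤ S.card

def RankEq {n : ℕ} (R : AddSubgroup (Fin n → ℤ)) (k : ℕ) : Prop :=
  GenLE R k ∧ RankGe R k

/-! ### Auxiliary lemmas -/

/-- Reverse strong induction on `Fin N`. -/
lemma revInd {N : ℕ} (P : Fin N → Prop)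
    (step : ∀ t, (∀ s, t < s → P s) → P t) : ∀ t, P t := by
  have key : ∀ (k : ℕ) (t : Fin N), N - (t : ℕ) ≤ k → P t := by
    intro k
    induction k with
    | zero => intro t ht; have := t.isLt; omega
    | succ k ih =>
      intro t _
      refine step t (fun s hs => ih s ?_)
      have h1 := Fin.lt_def.mp hs
      have := s.isLt
      omega
  intro t; exact key N t (by have := t.isLt; omega)

lemma mulVec_apply' {N : ℕ} (A : Matrix (Fin N) (Fin N) ℤ) (x : Fin N → ℤ) (m : Fin N) :
    A.mulVec x m = ∑ ℓ, A m ℓ * x ℓ := by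
  simp [Matrix.mulVec, dotProduct]

lemma mem_colSpan_iff {N : ℕ} (A : Matrix (Fin N) (Fin N) ℤ) (w : Fin N → ℤ) :
    w ∈ colSpan A ↔ ∃ x : Fin N → ℤ, w = A.mulVec x := by
  rw [colSpan, ← Submodule.span_int_eq_addSubgroupClosure, Submodule.mem_toAddSubgroup,
    Submodule.mem_span_range_iff_exists_fun]
  constructor
  · rintro ⟨c, hc⟩
    refine ⟨c, ?_⟩
    rw [← hc]
    funext m
    simp [mulVec_apply', Finset.sum_apply, mul_comm]
  · rintro ⟨x, rfl⟩
    refine ⟨x, ?_⟩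
    funext m
    simp [mulVec_apply', Finset.sum_apply, mul_comm]

lemma row_split {N : ℕ} (A : Matrix (Fin N) (Fin N) ℤ)
    (hlow : ∀ i j : Fin N, (j : ℕ) < (i : ℕ) → A i j = 0)
    (x : Fin N → ℤ) (m : Fin N) :
    A.mulVec x m = A m m * x m
      + ∑ ℓ ∈ Finset.univ.filter (fun ℓ : Fin N => (m : ℕ) < (ℓ : ℕ)), A m ℓ * x ℓ := by
  have h := Finset.sum_filter_add_sum_filter_not Finset.univ
    (fun ℓ : Fin N => (m : ℕ) < (ℓ : ℕ)) (fun ℓ => A m ℓ * x ℓ)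
  have h2 : ∑ ℓ ∈ Finset.univ.filter (fun ℓ : Fin N => ¬ (m : ℕ) < (ℓ : ℕ)), A m ℓ * x ℓ
      = A m m * x m := by
    apply Finset.sum_eq_single_of_mem
    · simp
    · intro ℓ hℓ hne
      simp only [Finset.mem_filter, Finset.mem_univ, true_and] at hℓ
      have hlt : (ℓ : ℕ) < (m : ℕ) := by
        rcases Nat.lt_trichotomy (ℓ : ℕ) (m : ℕ) with h' | h' | h'
        · exact h'
        · exact absurd (Fin.ext h') hne
        · exact absurd h' hℓ
      rw [hlow m ℓ hlt, zero_mul]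
  rw [mulVec_apply', ← h, h2, add_comm]

lemma backsub_zero {N : ℕ} (A : Matrix (Fin N) (Fin N) ℤ)
    (hlow : ∀ i j : Fin N, (j : ℕ) < (i : ℕ) → A i j = 0)
    (hd : ∀ m, A m m ≠ 0) (x : Fin N → ℤ) (i : Fin N)
    (h0 : ∀ m, i < m → A.mulVec x m = 0) : ∀ m, i < m → x m = 0 := by
  refine revInd (fun m => i < m → x m = 0) ?_
  intro m IH him
  have h := row_split A hlow x m
  rw [h0 m him] at h
  have hsum : ∑ ℓ ∈ Finset.univ.filter (fun ℓ : Fin N => (m : ℕ) < (ℓ : ℕ)),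
      A m ℓ * x ℓ = 0 := by
    apply Finset.sum_eq_zero
    intro ℓ hℓ
    simp only [Finset.mem_filter, Finset.mem_univ, true_and] at hℓ
    have hmℓ : m < ℓ := Fin.lt_def.mpr hℓ
    rw [IH ℓ hmℓ (lt_trans him hmℓ), mul_zero]
  rw [hsum, add_zero] at h
  have : A m m * x m = 0 := h.symm
  exact (mul_eq_zero.mp this).resolve_left (hd m)

lemma backsub_dvd {N : ℕ} (p : ℕ) (hp : p.Prime) (A : Matrix (Fin N) (Fin N) ℤ)
    (hlow : ∀ i j : Fin N, (j : ℕ) < (i : ℕ) → A i j = 0)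
    (E : Fin N → ℕ) (hdg : ∀ m, A m m = (p : ℤ) ^ E m)
    (x : Fin N → ℤ) (i : Fin N)
    (hw : ∀ m, i < m → ((p : ℤ)) ^ ((∑ ℓ, E ℓ) + 1) ∣ A.mulVec x m) :
    ∀ m, i < m → (p : ℤ) ∣ x m := by
  set D := ∑ ℓ, E ℓ with hD
  set S : Fin N → ℕ := fun m => ∑ ℓ ∈ Finset.univ.filter (fun ℓ : Fin N => (m : ℕ) ≤ (ℓ : ℕ)), E ℓ
    with hS
  have hSle : ∀ m, S m ≤ D :=
    fun m => Finset.sum_le_sum_of_subset (Finset.filter_subset _ _)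
  have hESm : ∀ m, E m ≤ S m := by
    intro m
    refine Finset.single_le_sum (fun _ _ => Nat.zero_le _) ?_
    simp
  have hSrec : ∀ m ℓ : Fin N, (m : ℕ) < (ℓ : ℕ) → S ℓ + E m ≤ S m := by
    intro m ℓ hml
    have hm : m ∉ Finset.univ.filter (fun ℓ' : Fin N => (ℓ : ℕ) ≤ (ℓ' : ℕ)) := by
      simp only [Finset.mem_filter, Finset.mem_univ, true_and]
      omega
    have hsub : insert m (Finset.univ.filter (fun ℓ' : Fin N => (ℓ : ℕ) ≤ (ℓ' : ℕ)))
        ⊆ Finset.univ.filter (fun ℓ' : Fin N => (m : ℕ) ≤ (ℓ' : ℕ)) := by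
      intro a ha
      simp only [Finset.mem_insert, Finset.mem_filter, Finset.mem_univ, true_and] at *
      rcases ha with rfl | ha
      · omega
      · omega
    calc S ℓ + E m = ∑ ℓ' ∈ insert m (Finset.univ.filter
          (fun ℓ' : Fin N => (ℓ : ℕ) ≤ (ℓ' : ℕ))), E ℓ' := by
          rw [Finset.sum_insert hm]; ring
      _ ≤ S m := Finset.sum_le_sum_of_subset hsub
  have hpne : ∀ k : ℕ, ((p : ℤ)) ^ k ≠ 0 :=
    fun k => pow_ne_zero _ (by exact_mod_cast hp.ne_zero)
  have key : ∀ m, i < m → ((p : ℤ)) ^ (D + 1 - S m) ∣ x m := by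
    refine revInd (fun m => i < m → ((p : ℤ)) ^ (D + 1 - S m) ∣ x m) ?_
    intro m IH him
    have hrow := row_split A hlow x m
    have h1 : ((p : ℤ)) ^ (D + 1 - S m + E m) ∣ A.mulVec x m := by
      refine dvd_trans (pow_dvd_pow _ ?_) (hw m him)
      have := hESm m; have := hSle m; omega
    have h2 : ((p : ℤ)) ^ (D + 1 - S m + E m) ∣
        ∑ ℓ ∈ Finset.univ.filter (fun ℓ : Fin N => (m : ℕ) < (ℓ : ℕ)), A m ℓ * x ℓ := by
      apply Finset.dvd_sum
      intro ℓ hℓ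
      simp only [Finset.mem_filter, Finset.mem_univ, true_and] at hℓ
      have hmℓ : m < ℓ := Fin.lt_def.mpr hℓ
      have hdx := IH ℓ hmℓ (lt_trans him hmℓ)
      refine Dvd.dvd.mul_left (dvd_trans (pow_dvd_pow _ ?_) hdx) _
      have := hSrec m ℓ hℓ
      have := hSle ℓ
      have := hSle m
      omega
    have h3 : ((p : ℤ)) ^ (D + 1 - S m + E m) ∣ A m m * x m := by
      have heq : A m m * x m = A.mulVec x m
          - ∑ ℓ ∈ Finset.univ.filter (fun ℓ : Fin N => (m : ℕ) < (ℓ : ℕ)), A m ℓ * x ℓ := by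
        rw [hrow]; ring
      rw [heq]
      exact dvd_sub h1 h2
    rw [hdg m] at h3
    have h4 : (p : ℤ) ^ E m * (p : ℤ) ^ (D + 1 - S m) ∣ (p : ℤ) ^ E m * x m := by
      rw [← pow_add]
      convert h3 using 2
      ring
    exact (mul_dvd_mul_iff_left (hpne (E m))).mp h4
  intro m him
  refine dvd_trans ?_ (key m him)
  have h5 : 1 ≤ D + 1 - S m := by have := hSle m; omega
  calc (p : ℤ) = (p : ℤ) ^ 1 := (pow_one _).symm
    _ ∣ (p : ℤ) ^ (D + 1 - S m) := pow_dvd_pow _ h5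

theorem exactly_one_entry_one (n p : ℕ) (hp : p.Prime)
    (A : Matrix (Fin (n + 1)) (Fin (n + 1)) ℤ) (hA : IsSubringMatrix A)
    (e : Fin n → ℕ)
    (hdiag : ∀ i : Fin n, A i.castSucc i.castSucc = (p : ℤ) ^ e i)
    (hlast : A (Fin.last n) (Fin.last n) = 1)
    (i : Fin n) (hi : e i ≠ 0) :
    ∃ j : Fin (n + 1), (∀ t : Fin n, j = t.castSucc → e t = 0) ∧
      A i.castSucc j = 1 ∧
      ∀ ℓ : Fin (n + 1), (∀ t : Fin n, ℓ = t.castSucc → e t = 0) → ℓ ≠ j →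
        A i.castSucc ℓ = 0 := by
  obtain ⟨⟨hlow, hup⟩, hdet, hone, hmul⟩ := hA
  -- exponents on the full index set
  set E : Fin (n + 1) → ℕ := fun m => Fin.lastCases 0 e m with hE
  have hEcast : ∀ t : Fin n, E t.castSucc = e t := by
    intro t; simp [hE]
  have hElast : E (Fin.last n) = 0 := by simp [hE]
  have hdg : ∀ m, A m m = (p : ℤ) ^ E m := by
    intro m
    induction m using Fin.lastCases with
    | last => rw [hlast, hElast, pow_zero]
    | cast t => rw [hdiag t, hEcast]
  have hp2 : (2 : ℤ) ≤ (p : ℤ) := by exact_mod_cast hp.two_le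
  have hpZ : Prime (p : ℤ) := Nat.prime_iff_prime_int.mp hp
  set NP : Fin (n + 1) → Prop := fun j => ∀ t : Fin n, j = t.castSucc → e t = 0 with hNP
  have hNdiag : ∀ j : Fin (n + 1), NP j → A j j = 1 := by
    intro j hj
    rw [hdg j]
    induction j using Fin.lastCases with
    | last => rw [hElast, pow_zero]
    | cast t => rw [hEcast, hj t rfl, pow_zero]
  have hrowN : ∀ k : Fin (n + 1), A k k = 1 → ∀ ℓ, A k ℓ = if ℓ = k then 1 else 0 := by
    intro k hk ℓ
    rcases Nat.lt_trichotomy (ℓ : ℕ) (k : ℕ) with h | h | h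
    · rw [hlow k ℓ h, if_neg (fun hh => by subst hh; omega)]
    · have : ℓ = k := Fin.ext h
      rw [if_pos this, this, hk]
    · have h2 := hup k ℓ h
      rw [hk] at h2
      rw [if_neg (fun hh => by subst hh; omega)]
      omega
  have hmem : ∀ w : Fin (n + 1) → ℤ, w ∈ colSpan A → ∃ x, w = A.mulVec x :=
    fun w hw => (mem_colSpan_iff A w).mp hw
  have hcol : ∀ j, (fun m => A m j) ∈ colSpan A :=
    fun j => AddSubgroup.subset_closure ⟨j, rfl⟩
  have hpow : ∀ w : Fin (n + 1) → ℤ, w ∈ colSpan A → ∀ k : ℕ, w ^ (k + 1) ∈ colSpan A := by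
    intro w hw k
    induction k with
    | zero => simpa using hw
    | succ k ih => rw [pow_succ]; exact hmul _ _ ih hw
  have main : ∀ t : Fin n, e t ≠ 0 →
      (∀ ℓ : Fin (n + 1), ¬ NP ℓ → (p : ℤ) ∣ A t.castSucc ℓ) ∧
      (∃ j, NP j ∧ A t.castSucc j = 1 ∧ ∀ ℓ, NP ℓ → ℓ ≠ j → A t.castSucc ℓ = 0) := by
    refine revInd (fun t => e t ≠ 0 →
      (∀ ℓ : Fin (n + 1), ¬ NP ℓ → (p : ℤ) ∣ A t.castSucc ℓ) ∧
      (∃ j, NP j ∧ A t.castSucc j = 1 ∧ ∀ ℓ, NP ℓ → ℓ ≠ j → A t.castSucc ℓ = 0)) ?_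
    intro t IH het
    set i' := t.castSucc with hi'
    have hdii : A i' i' = (p : ℤ) ^ e t := hdiag t
    have hpd : (p : ℤ) ∣ A i' i' := by rw [hdii]; exact dvd_pow_self _ het
    have hrowIH : ∀ m : Fin (n + 1), i' < m → ¬ NP m →
        (∀ ℓ, ¬ NP ℓ → (p : ℤ) ∣ A m ℓ) ∧
        (∃ j, NP j ∧ A m j = 1 ∧ ∀ ℓ, NP ℓ → ℓ ≠ j → A m ℓ = 0) := by
      intro m him hm
      have hex : ∃ s, m = s.castSucc ∧ e s ≠ 0 := by
        by_contra h
        push_neg at h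
        exact hm (fun s hs => h s hs)
      obtain ⟨s, rfl, hes⟩ := hex
      have hts : t < s := by
        rw [hi'] at him
        exact (Fin.castSucc_lt_castSucc_iff).mp him
      exact IH s hts hes
    -- Claim A: entries of row i' at non-N columns are divisible by p
    have claimA : ∀ ℓ, ¬ NP ℓ → (p : ℤ) ∣ A i' ℓ := by
      intro ℓ0 hℓ0
      by_contra hnd
      set D := ∑ m, E m with hD
      set w : Fin (n + 1) → ℤ := fun m => A m ℓ0 with hw
      have hz : w ^ (D + 1) ∈ colSpan A := hpow w (hcol ℓ0) D
      obtain ⟨x, hx⟩ := hmem _ hz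
      have hdvd : ∀ m, i' < m → (p : ℤ) ^ (D + 1) ∣ A.mulVec x m := by
        intro m him
        rw [← hx]
        have hzm : (w ^ (D + 1)) m = (A m ℓ0) ^ (D + 1) := by simp [hw]
        rw [hzm]
        by_cases hm : NP m
        · have h1 := hNdiag m hm
          have h0 : A m ℓ0 = 0 := by
            rw [hrowN m h1 ℓ0, if_neg]
            intro hh
            exact hℓ0 (hh ▸ hm)
          rw [h0]
          simp
        · exact pow_dvd_pow_of_dvd ((hrowIH m him hm).1 ℓ0 hℓ0) _
      have hxdvd := backsub_dvd p hp A hlow E hdg x i' hdvd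
      have hzi : A.mulVec x i' = (A i' ℓ0) ^ (D + 1) := by
        rw [← hx]; simp [hw]
      have hdi : (p : ℤ) ∣ A.mulVec x i' := by
        rw [row_split A hlow x i']
        apply dvd_add
        · exact hpd.mul_right _
        · refine Finset.dvd_sum ?_
          intro ℓ hℓ
          simp only [Finset.mem_filter, Finset.mem_univ, true_and] at hℓ
          exact (hxdvd ℓ (Fin.lt_def.mpr hℓ)).mul_left _
      rw [hzi] at hdi
      exact hnd (hpZ.dvd_of_dvd_pow hdi)
    -- products of N-columns
    have hprod : ∀ j k : Fin (n + 1), NP j → NP k →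
        (p : ℤ) ^ e t ∣ A i' j * A i' k - (if j = k then A i' j else 0) := by
      intro j k hj hk
      set c : ℤ := if j = k then 1 else 0 with hc
      set w : Fin (n + 1) → ℤ := (fun m => A m j) * (fun m => A m k) - c • (fun m => A m j)
        with hw
      have hwR : w ∈ colSpan A := by
        apply AddSubgroup.sub_mem
        · exact hmul _ _ (hcol j) (hcol k)
        · rcases eq_or_ne j k with h | h
          · rw [hc]
            rw [if_pos h, one_smul]
            exact hcol j
          · rw [hc]
            rw [if_neg h, zero_smul]
            exact AddSubgroup.zero_mem _
      obtain ⟨x, hx⟩ := hmem _ hwR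
      have hval : ∀ m, w m = A m j * A m k - c * A m j := by
        intro m
        simp [hw, smul_eq_mul]
      have hwm0 : ∀ m, i' < m → A.mulVec x m = 0 := by
        intro m him
        rw [← hx, hval]
        by_cases hm : NP m
        · have h1 := hNdiag m hm
          rw [hrowN m h1 j, hrowN m h1 k]
          rcases eq_or_ne j k with h | h
          · subst h
            rw [hc, if_pos rfl]
            split_ifs <;> ring
          · rw [hc, if_neg h]
            by_cases hjm : j = m
            · have hkm : ¬ k = m := fun hh => h (hjm.trans hh.symm)
              rw [if_pos hjm, if_neg hkm]
              ring
            · rw [if_neg hjm]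
              ring
        · obtain ⟨_, j', hj', hj'1, hj'0⟩ := hrowIH m him hm
          have hv : ∀ u, NP u → A m u = if u = j' then 1 else 0 := by
            intro u hu
            split_ifs with h
            · rw [h]; exact hj'1
            · exact hj'0 u hu h
          rw [hv j hj, hv k hk]
          rcases eq_or_ne j k with h | h
          · subst h
            rw [hc, if_pos rfl]
            split_ifs <;> ring
          · rw [hc, if_neg h]
            by_cases hjj : j = j'
            · have hkj : ¬ k = j' := fun hh => h (hjj.trans hh.symm)
              rw [if_pos hjj, if_neg hkj]
              ring
            · rw [if_neg hjj]
              ring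
      have hdne : ∀ m : Fin (n + 1), A m m ≠ 0 := by
        intro m
        rw [hdg m]
        exact pow_ne_zero _ (by exact_mod_cast hp.ne_zero)
      have hx0 := backsub_zero A hlow hdne x i' hwm0
      have hwi : w i' = A i' i' * x i' := by
        rw [hx, row_split A hlow x i']
        rw [Finset.sum_eq_zero, add_zero]
        intro ℓ hℓ
        simp only [Finset.mem_filter, Finset.mem_univ, true_and] at hℓ
        rw [hx0 ℓ (Fin.lt_def.mpr hℓ), mul_zero]
      have hdvdwi : (p : ℤ) ^ e t ∣ w i' := by
        rw [hwi, hdii]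
        exact Dvd.intro _ rfl
      rw [hval i'] at hdvdwi
      have hceq : c * A i' j = if j = k then A i' j else 0 := by
        rw [hc]; split_ifs <;> ring
      rwa [hceq] at hdvdwi
    -- the all-ones vector
    obtain ⟨xu, hxu⟩ := hmem _ hone
    have hxuN : ∀ k, NP k → xu k = 1 := by
      intro k hk
      have h1 := hNdiag k hk
      have h2 : A.mulVec xu k = xu k := by
        rw [mulVec_apply']
        rw [Finset.sum_eq_single k]
        · rw [hrowN k h1 k, if_pos rfl, one_mul]
        · intro ℓ _ hne
          rw [hrowN k h1 ℓ, if_neg hne, zero_mul]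
        · intro h; exact absurd (Finset.mem_univ k) h
      have h3 : (1 : ℤ) = A.mulVec xu k := congrFun hxu k
      omega
    have hexj : ∃ j, NP j ∧ ¬ (p : ℤ) ∣ A i' j := by
      by_contra h
      push_neg at h
      have hd1 : (p : ℤ) ∣ 1 := by
        have h1 : (1 : ℤ) = A.mulVec xu i' := congrFun hxu i'
        rw [h1, mulVec_apply']
        apply Finset.dvd_sum
        intro ℓ _
        by_cases hℓ : NP ℓ
        · exact (h ℓ hℓ).mul_right _
        · exact (claimA ℓ hℓ).mul_right _
      have := Int.le_of_dvd one_pos hd1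
      omega
    obtain ⟨j, hjN, hjnd⟩ := hexj
    have hij_lt : (i' : ℕ) < (j : ℕ) := by
      rcases Nat.lt_trichotomy (j : ℕ) (i' : ℕ) with h | h | h
      · exact absurd ((hlow i' j h) ▸ dvd_zero (p : ℤ)) hjnd
      · exfalso
        apply hjnd
        have hji : j = i' := Fin.ext h
        rw [hji]
        exact hpd
      · exact h
    have hbound := hup i' j hij_lt
    have hpe2 : (2 : ℤ) ≤ (p : ℤ) ^ e t :=
      le_trans hp2 (le_self_pow₀ (by linarith) het)
    have h1 : (p : ℤ) ^ e t ∣ (A i' j - 1) * A i' j := by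
      have hpp := hprod j j hjN hjN
      rw [if_pos rfl] at hpp
      convert hpp using 1
      ring
    have hcop : IsCoprime ((p : ℤ) ^ e t) (A i' j) :=
      (hpZ.coprime_iff_not_dvd.mpr hjnd).pow_left
    have h2 : (p : ℤ) ^ e t ∣ A i' j - 1 := hcop.dvd_of_dvd_mul_right h1
    have hAij : A i' j = 1 := by
      have habs : |A i' j - 1| < (p : ℤ) ^ e t := by
        rw [abs_lt]
        rw [hdii] at hbound
        constructor <;> [linarith [hbound.1]; linarith [hbound.2]]
      have := Int.eq_zero_of_abs_lt_dvd h2 habs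
      omega
    refine ⟨claimA, j, hjN, hAij, ?_⟩
    intro ℓ hℓN hℓj
    have h3 : (p : ℤ) ^ e t ∣ A i' ℓ := by
      have hpp := hprod j ℓ hjN hℓN
      rw [if_neg (fun hh => hℓj hh.symm), hAij, one_mul, sub_zero] at hpp
      exact hpp
    rcases Nat.lt_trichotomy (ℓ : ℕ) (i' : ℕ) with h | h | h
    · exact hlow i' ℓ h
    · exfalso
      have hli : ℓ = i' := Fin.ext h
      rw [hi'] at hli
      exact het (hℓN t hli)
    · have hb := hup i' ℓ h
      have habs : |A i' ℓ| < (p : ℤ) ^ e t := by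
        rw [abs_of_nonneg hb.1, ← hdii]
        exact hb.2
      exact Int.eq_zero_of_abs_lt_dvd h3 habs
  exact (main i hi).2
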